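/- (Fundamental theorem, discrete case.) Let (C, F) be a pointed connected atomic site such that F is representable by an object A. Let J assign to each object X of C the collection of nonempty sieves on X. Then J is a Grothendieck topology on C, and the category of sheaves of sets on the site (C, J) is equivalent to the category of right Aut(A)-sets (sets equipped with a right action of the automorphism group of A, with equivariant maps as morphisms). -/

import Mathlib

/-!
Since `F ≅ Hom(A, -)`, conditions (ii) and (iii) say that `A` maps to every object and that every
arrow out of `A` lifts along every morphism. In particular every endomorphism of `A` is invertible,
and `A` alone is a dense subsite of the atomic site: the comparison lemma identifies sheaves on `C`
with sheaves on the one-object category `Aut A` for the induced topology. That topology is trivial,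
because a nonempty sieve on a group contains an invertible arrow and is therefore maximal, so these
sheaves are just presheaves on `Aut A`, i.e. right `Aut A`-sets.
-/

open CategoryTheory Opposite

universe u

/-- A pointed connected atomic site: a small category `C` together with a
set-valued functor `F` such that (i) every morphism is a strict epimorphism,
(ii) every `F X` is nonempty, (iii) `F` sends morphisms to surjections, and
(iv) the category of elements of `F` is cofiltered. -/
structure IsPCAS {C : Type u} [SmallCategory C] (F : C ⥤ Type u) : Prop where
  strict_epi : ∀ {Y X Z : C} (f : Y ⟶ X) (g : Y ⟶ Z),
    (∀ {W : C} (p q : W ⟶ Y), p ≫ f = q ≫ f → p ≫ g = q ≫ g) →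
    ∃! u : X ⟶ Z, f ≫ u = g
  nonempty : ∀ X : C, Nonempty (F.obj X)
  surjective : ∀ {X Y : C} (f : X ⟶ Y), Function.Surjective (F.map f)
  cofiltered : IsCofiltered F.Elements

namespace CategoryTheory

def SingleObj.opEquiv (M : Type*) [Monoid M] : (SingleObj M)ᵒᵖ ≌ SingleObj Mᵐᵒᵖ where
  functor :=
    { obj _ := SingleObj.star _
      map f := MulOpposite.op f.unop
      map_id _ := rfl
      map_comp _ _ := rfl }
  inverse :=
    { obj _ := op (SingleObj.star _)
      map f := (MulOpposite.unop f : SingleObj.star M ⟶ SingleObj.star M).op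
      map_id _ := rfl
      map_comp _ _ := rfl }
  unitIso := Iso.refl _
  counitIso := Iso.refl _

theorem SingleObj.sieve_eq_top {G : Type*} [Group G] {S : Sieve (SingleObj.star G)}
    {g : SingleObj.star G ⟶ SingleObj.star G} (hg : S g) : S = ⊤ := by
  refine Sieve.id_mem_iff_eq_top.1 ?_
  simpa only [SingleObj.comp_as_mul, mul_inv_cancel, SingleObj.id_as_one] using
    S.downward_closed hg ((g : G)⁻¹ : G)

variable {C : Type u} [SmallCategory C]

abbrev autInclusion (A : C) : SingleObj (Aut A) ⥤ C := SingleObj.functor (Aut.toEnd A)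

instance (A : C) : (autInclusion A).Faithful where
  map_injective h := Aut.ext h

theorem full_autInclusion {A : C} (h : ∀ u : A ⟶ A, IsIso u) : (autInclusion A).Full where
  map_surjective u := ⟨@asIso _ _ _ _ u (h u), rfl⟩

structure IsAtomicPoint (A : C) : Prop where
  nonempty_hom : ∀ X : C, Nonempty (A ⟶ X)
  exists_lift : ∀ {X Y : C} (g : X ⟶ Y) (b : A ⟶ Y), ∃ a : A ⟶ X, a ≫ g = b

theorem IsPCAS.isAtomicPoint {F : C ⥤ Type u} (hF : IsPCAS F) {A : C}
    (θ : coyoneda.obj (op A) ≅ F) : IsAtomicPoint A where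
  nonempty_hom X := (hF.nonempty X).map (θ.inv.app X)
  exists_lift {X Y} g b := by
    obtain ⟨z, hz⟩ := hF.surjective g (θ.hom.app Y b)
    refine ⟨θ.inv.app X z, ?_⟩
    calc θ.inv.app X z ≫ g = θ.inv.app Y (F.map g z) := (NatTrans.naturality_apply θ.inv g z).symm
      _ = b := by rw [hz, Iso.hom_inv_id_app_apply]

namespace IsAtomicPoint

open GrothendieckTopology

variable {A : C} (hA : IsAtomicPoint A)
include hA

theorem rightOreCondition : RightOreCondition C := fun {_ Y _} yx zx => by
  obtain ⟨a⟩ := hA.nonempty_hom Y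
  obtain ⟨b, hb⟩ := hA.exists_lift zx (a ≫ yx)
  exact ⟨A, a, b, hb.symm⟩

theorem isIso_of_endo (u : A ⟶ A) : IsIso u := by
  obtain ⟨v, hv⟩ := hA.exists_lift u (𝟙 A)
  obtain ⟨w, hw⟩ := hA.exists_lift v (𝟙 A)
  -- `v` has the left inverse `w` and the right inverse `u`
  have : u = w := by simpa [reassoc_of% hw] using congr(w ≫ $hv)
  exact ⟨v, this ▸ hw, hv⟩

theorem isCoverDense_autInclusion :
    (autInclusion A).IsCoverDense (atomic hA.rightOreCondition) where
  is_cover X := by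
    obtain ⟨f⟩ := hA.nonempty_hom X
    exact ⟨A, f, Presieve.in_coverByImage (autInclusion A) (Y := SingleObj.star _) f⟩

theorem inducedTopology_autInclusion :
    (autInclusion A).inducedTopology (atomic hA.rightOreCondition) = ⊥ := by
  have := hA.isCoverDense_autInclusion
  have := full_autInclusion hA.isIso_of_endo
  ext X S
  rw [Functor.mem_inducedTopology_iff_of_isCoverDense, bot_covering]
  constructor
  · rintro ⟨-, -, Y, g, -, hg, -⟩
    exact SingleObj.sieve_eq_top hg
  · rintro rfl
    rw [Sieve.functorPushforward_top]
    exact (atomic _).top_mem _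

theorem nonempty_sheafEquivAction :
    Nonempty (Sheaf (atomic hA.rightOreCondition) (Type u) ≌
      Action (Type u) (MonCat.of ((Aut A)ᵐᵒᵖ))) := by
  have := hA.isCoverDense_autInclusion
  have := full_autInclusion hA.isIso_of_endo
  have comparison := (autInclusion A).sheafInducedTopologyEquivOfIsCoverDense
    (atomic hA.rightOreCondition) (Type u)
  rw [hA.inducedTopology_autInclusion] at comparison
  exact ⟨comparison.symm.trans <| (sheafBotEquivalence (Type u)).trans <|
    (SingleObj.opEquiv (Aut A)).congrLeft.trans (Action.functorCategoryEquivalence _ _).symm⟩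

end IsAtomicPoint

end CategoryTheory

/-- Fundamental theorem, discrete case: for a pointed connected atomic site
`(C, F)` with `F` representable by `A`, the nonempty sieves form a
Grothendieck topology `J` on `C`, and the topos of sheaves on `(C, J)` is
equivalent to the category of right `Aut(A)`-sets, i.e. left
`(Aut A)ᵐᵒᵖ`-sets. -/
theorem stmt11 {C : Type u} [SmallCategory C] (F : C ⥤ Type u)
    (hF : IsPCAS F) (A : C) (θ : coyoneda.obj (op A) ≅ F) :
    ∃ J : GrothendieckTopology C,
      (∀ (X : C) (S : Sieve X), S ∈ J X ↔ ∃ (Y : C) (f : Y ⟶ X), S f) ∧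
      Nonempty (Sheaf J (Type u) ≌ Action (Type u) (MonCat.of ((Aut A)ᵐᵒᵖ))) := by
  have hA := hF.isAtomicPoint θ
  exact ⟨GrothendieckTopology.atomic hA.rightOreCondition, fun _ _ => Iff.rfl,
    hA.nonempty_sheafEquivAction⟩
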